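/- arXiv:1309.6693 — 3 statements merged into one kernel-verified Lean document; each statement's English description precedes it below -/
import Mathlib

section
/- For all t ≥ 0, V(e(t), W̃(t)) ≤ V(e(0), W̃(0)); consequently the system error satisfies ‖e(t)‖₂ ≤ √( V(e(0), W̃(0)) / λ_min(P) ) for all t ≥ 0. -/
/-!
Along a trajectory, `V' = -eᵀRe ≤ 0`. Writing `tr((W̃Λ^{1/2})ᵀ(W̃Λ^{1/2}))` as the sum over the rows
`w_j` of `W̃` of `w_jᵀΛw_j`, the update law makes `γ⁻¹` times its derivative equal to
`2 eᵀPBΛW̃ᵀσ`, which cancels the cross term coming from the error dynamics exactly; what is left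
of `d/dt (eᵀPe)` is `eᵀ(A_rᵀP + PA_r)e = -eᵀRe`. Hence `V` is nonincreasing, and
`λ_min(P) ‖e‖² ≤ eᵀPe ≤ V(t) ≤ V(0)`.
-/

open Matrix Filter

noncomputable section

/-- Euclidean norm ‖·‖₂ of a vector. -/
def norm2 {n : ℕ} (v : Fin n → ℝ) : ℝ := Real.sqrt (∑ i, v i ^ 2)

/-- Supremum (infinity) norm ‖·‖_∞ of a vector (the sup norm on `Fin n → ℝ`). -/
def normInf {n : ℕ} (v : Fin n → ℝ) : ℝ := ‖v‖

/-- Frobenius norm ‖·‖_F of a matrix. -/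
def normF {N m : ℕ} (W : Matrix (Fin N) (Fin m) ℝ) : ℝ := Real.sqrt (∑ i, ∑ j, W i j ^ 2)

/-- Smallest eigenvalue λ_min of a real symmetric (Hermitian) matrix. -/
def lamMin {n : ℕ} {A : Matrix (Fin n) (Fin n) ℝ} (hA : A.IsHermitian) : ℝ := ⨅ i, hA.eigenvalues i

/-- Largest eigenvalue λ_max of a real symmetric (Hermitian) matrix. -/
def lamMax {n : ℕ} {A : Matrix (Fin n) (Fin n) ℝ} (hA : A.IsHermitian) : ℝ := ⨆ i, hA.eigenvalues i

/-- A real square matrix is Hurwitz if every (complex) eigenvalue has negative real part. -/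
def Hurwitz {n : ℕ} (A : Matrix (Fin n) (Fin n) ℝ) : Prop :=
  ∀ μ : ℂ, (A.map Complex.ofReal).charpoly.IsRoot μ → μ.re < 0

/-- The Lyapunov function V(e, W̃) = eᵀ P e + γ⁻¹ tr((W̃ Λ^{1/2})ᵀ (W̃ Λ^{1/2})). -/
def Vlyap {n N m : ℕ} (γ : ℝ) (P : Matrix (Fin n) (Fin n) ℝ)
    (Lhalf : Matrix (Fin m) (Fin m) ℝ) (e : Fin n → ℝ) (W : Matrix (Fin N) (Fin m) ℝ) : ℝ :=
  e ⬝ᵥ (P *ᵥ e) + γ⁻¹ * ((W * Lhalf)ᵀ * (W * Lhalf)).trace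

/-- The augmented Lyapunov function V* of Theorem 5.1. -/
def Vstar {n N m : ℕ} (γ κ η ξ : ℝ) (P R : Matrix (Fin n) (Fin n) ℝ)
    (hP : P.IsHermitian) (hR : R.IsHermitian)
    (Lhalf : Matrix (Fin m) (Fin m) ℝ)
    (e : Fin n → ℝ) (W : Matrix (Fin N) (Fin m) ℝ) (eL xt : Fin n → ℝ) : ℝ :=
  Vlyap γ P Lhalf e W + η⁻¹ * κ * (eL ⬝ᵥ (P *ᵥ eL))
    + 2 * ξ * κ⁻¹ * (lamMax hP)⁻¹ * lamMin hR * (xt ⬝ᵥ (P *ᵥ xt))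

namespace Matrix

variable {ι κ ν : Type*} [Fintype ι] [Fintype κ] [Fintype ν]

lemma IsSymm.dotProduct_mulVec_comm {P : Matrix ι ι ℝ} (hP : P.IsSymm) (x y : ι → ℝ) :
    x ⬝ᵥ (P *ᵥ y) = y ⬝ᵥ (P *ᵥ x) := by
  rw [dotProduct_mulVec, dotProduct_comm, ← mulVec_transpose, hP.eq]

lemma IsSymm.two_mul_dotProduct_mulVec_mulVec {P : Matrix ι ι ℝ} (hP : P.IsSymm)
    (A : Matrix ι ι ℝ) (x : ι → ℝ) :
    2 * (x ⬝ᵥ (P *ᵥ (A *ᵥ x))) = x ⬝ᵥ ((Aᵀ * P + P * A) *ᵥ x) := by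
  rw [add_mulVec, dotProduct_add, ← mulVec_mulVec, ← mulVec_mulVec, hP.dotProduct_mulVec_comm,
    dotProduct_mulVec x Aᵀ, vecMul_transpose]
  ring

lemma trace_mul_mul_transpose (W : Matrix κ ι ℝ) (M : Matrix ι ι ℝ) :
    (W * M * Wᵀ).trace = ∑ j, W j ⬝ᵥ (M *ᵥ W j) := by
  simp only [trace, diag, mul_apply, transpose_apply, dotProduct, mulVec, Finset.sum_mul,
    Finset.mul_sum]
  refine Finset.sum_congr rfl fun j _ => Finset.sum_comm.trans ?_
  exact Finset.sum_congr rfl fun k _ => Finset.sum_congr rfl fun l _ => by ring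

lemma trace_transpose_mul_self_mul (W : Matrix κ ι ℝ) (L : Matrix ι ι ℝ) :
    ((W * L)ᵀ * (W * L)).trace = ∑ j, W j ⬝ᵥ ((L * Lᵀ) *ᵥ W j) := by
  rw [trace_mul_comm, transpose_mul, ← Matrix.mul_assoc, Matrix.mul_assoc W,
    trace_mul_mul_transpose]

lemma dotProduct_mulVec_mul_transpose_mulVec {B : Matrix ι κ ℝ} {Λ : Matrix κ κ ℝ}
    (hΛ : Λ.IsSymm) (W : Matrix ν κ ℝ) (x : ι → ℝ) (σ : ν → ℝ) :
    x ⬝ᵥ ((B * Λ * Wᵀ) *ᵥ σ) = σ ⬝ᵥ (W *ᵥ (Λ *ᵥ (x ᵥ* B))) := by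
  rw [← mulVec_mulVec, ← mulVec_mulVec, dotProduct_mulVec, hΛ.dotProduct_mulVec_comm,
    mulVec_transpose, ← dotProduct_mulVec]

open Unitary in
lemma IsHermitian.posSemidef_sub_smul_one {n : Type*} [Fintype n] [DecidableEq n]
    {A : Matrix n n ℝ} (hA : A.IsHermitian) {c : ℝ} (hc : ∀ i, c ≤ hA.eigenvalues i) :
    (A - c • 1).PosSemidef := by
  have hdecomp : A - c • 1 = conjStarAlgAut ℝ _ hA.eigenvectorUnitary
      (diagonal fun i => hA.eigenvalues i - c) := by
    conv_lhs => rw [hA.spectral_theorem]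
    rw [← map_one (conjStarAlgAut ℝ _ hA.eigenvectorUnitary), ← map_smul, ← map_sub,
      ← diagonal_one, ← diagonal_smul, diagonal_sub]
    congr; funext i; simp
  rw [hdecomp, conjStarAlgAut_apply, star_eq_conjTranspose]
  exact (posSemidef_diagonal_iff.mpr fun i => sub_nonneg.mpr (hc i)).mul_mul_conjTranspose_same _

lemma IsHermitian.lamMin_mul_dotProduct_self_le {n : ℕ} {P : Matrix (Fin n) (Fin n) ℝ}
    (hP : P.IsHermitian) (x : Fin n → ℝ) : lamMin hP * (x ⬝ᵥ x) ≤ x ⬝ᵥ (P *ᵥ x) := by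
  have hpsd := hP.posSemidef_sub_smul_one fun i => ciInf_le (Finite.bddBelow_range _) i
  have := hpsd.dotProduct_mulVec_nonneg x
  simp only [star_trivial, sub_mulVec, smul_mulVec, one_mulVec, dotProduct_sub, dotProduct_smul,
    smul_eq_mul] at this
  unfold lamMin
  linarith

lemma PosDef.lamMin_pos {n : ℕ} (hn : 0 < n) {P : Matrix (Fin n) (Fin n) ℝ}
    (hP : P.PosDef) : 0 < lamMin hP.1 := by
  have : Nonempty (Fin n) := ⟨⟨0, hn⟩⟩
  obtain ⟨i, hi⟩ := exists_eq_ciInf_of_finite (f := hP.1.eigenvalues)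
  rw [lamMin, ← hi]
  exact hP.eigenvalues_pos i

end Matrix

section Calculus

variable {ι κ : Type*} [Fintype ι] [Fintype κ] {f g : ℝ → ι → ℝ} {f' g' : ι → ℝ} {t : ℝ}

lemma HasDerivAt.dotProduct (hf : HasDerivAt f f' t) (hg : HasDerivAt g g' t) :
    HasDerivAt (fun s => f s ⬝ᵥ g s) (f' ⬝ᵥ g t + f t ⬝ᵥ g') t := by
  have hsum : HasDerivAt (fun s => ∑ i, f s i * g s i) (∑ i, (f' i * g t i + f t i * g' i)) t :=
    HasDerivAt.fun_sum fun i _ => (hasDerivAt_pi.mp hf i).fun_mul (hasDerivAt_pi.mp hg i)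
  rwa [Finset.sum_add_distrib] at hsum

lemma HasDerivAt.const_mulVec (A : Matrix κ ι ℝ) (hf : HasDerivAt f f' t) :
    HasDerivAt (fun s => A *ᵥ f s) (A *ᵥ f') t :=
  (Matrix.mulVecLin A).toContinuousLinearMap.hasFDerivAt.comp_hasDerivAt t hf

lemma HasDerivAt.dotProduct_mulVec_self {P : Matrix ι ι ℝ} (hP : P.IsSymm)
    (hf : HasDerivAt f f' t) :
    HasDerivAt (fun s => f s ⬝ᵥ (P *ᵥ f s)) (2 * (f t ⬝ᵥ (P *ᵥ f'))) t := by
  convert hf.dotProduct (hf.const_mulVec P) using 1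
  rw [hP.dotProduct_mulVec_comm]
  ring

lemma antitoneOn_Ici_of_hasDerivAt_nonpos {F F' : ℝ → ℝ} {a : ℝ}
    (hF : ∀ t ≥ a, HasDerivAt F (F' t) t) (hF' : ∀ t ≥ a, F' t ≤ 0) : AntitoneOn F (Set.Ici a) :=
  antitoneOn_of_hasDerivWithinAt_nonpos (convex_Ici a)
    (fun t ht => (hF t ht).continuousAt.continuousWithinAt)
    (fun t ht => (hF t (interior_subset ht)).hasDerivWithinAt)
    (fun t ht => hF' t (interior_subset ht))

end Calculus

lemma norm2_le_sqrt_div_lamMin {n : ℕ} (hn : 0 < n) {P : Matrix (Fin n) (Fin n) ℝ}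
    (hP : P.PosDef) {x : Fin n → ℝ} {c : ℝ} (hx : x ⬝ᵥ (P *ᵥ x) ≤ c) :
    norm2 x ≤ Real.sqrt (c / lamMin hP.1) := by
  refine Real.sqrt_le_sqrt ((le_div_iff₀ (hP.lamMin_pos hn)).mpr ?_)
  have hray := hP.1.lamMin_mul_dotProduct_self_le x
  have hsq : x ⬝ᵥ x = ∑ i, x i ^ 2 := by simp only [dotProduct, sq]
  rw [hsq, mul_comm] at hray
  linarith

lemma dotProduct_mulVec_le_Vlyap {n N m : ℕ} {γ : ℝ} (hγ : 0 < γ)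
    (P : Matrix (Fin n) (Fin n) ℝ) (L : Matrix (Fin m) (Fin m) ℝ) (e : Fin n → ℝ)
    (W : Matrix (Fin N) (Fin m) ℝ) :
    e ⬝ᵥ (P *ᵥ e) ≤ Vlyap γ P L e W := by
  have htrace : 0 ≤ ((W * L)ᵀ * (W * L)).trace := by
    simpa [conjTranspose_eq_transpose_of_trivial] using
      (posSemidef_conjTranspose_mul_self (W * L)).trace_nonneg
  have := mul_nonneg (inv_nonneg.mpr hγ.le) htrace
  unfold Vlyap
  linarith

section Trajectory

variable {n N m : ℕ} {Ar R P : Matrix (Fin n) (Fin n) ℝ} {B : Matrix (Fin n) (Fin m) ℝ}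
  {L Λ : Matrix (Fin m) (Fin m) ℝ} {γ : ℝ}

lemma Vlyap_eq_add_sum_rows (hL : L.IsSymm) (hLΛ : L * L = Λ) (e : Fin n → ℝ)
    (W : Matrix (Fin N) (Fin m) ℝ) :
    Vlyap γ P L e W = e ⬝ᵥ (P *ᵥ e) + γ⁻¹ * ∑ j, W j ⬝ᵥ (Λ *ᵥ W j) := by
  rw [Vlyap, trace_transpose_mul_self_mul, hL.eq, hLΛ]

lemma lyapunov_derivative_eq (hP : P.IsSymm) (hΛ : Λ.IsSymm)
    (hLyap : Arᵀ * P + P * Ar + R = 0) (hγ : γ ≠ 0) (e : Fin n → ℝ)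
    (W : Matrix (Fin N) (Fin m) ℝ) (σ : Fin N → ℝ) :
    2 * (e ⬝ᵥ (P *ᵥ (Ar *ᵥ e - (B * Λ * Wᵀ) *ᵥ σ)))
      + γ⁻¹ * ∑ j, 2 * (W j ⬝ᵥ (Λ *ᵥ ((γ * σ j) • (e ᵥ* (P * B)))))
      = -(e ⬝ᵥ (R *ᵥ e)) := by
  have hcross : e ⬝ᵥ (P *ᵥ ((B * Λ * Wᵀ) *ᵥ σ))
      = ∑ j, σ j * (W j ⬝ᵥ (Λ *ᵥ (e ᵥ* (P * B)))) := by
    rw [mulVec_mulVec, ← Matrix.mul_assoc, ← Matrix.mul_assoc,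
      dotProduct_mulVec_mul_transpose_mulVec hΛ]
    rfl
  have hdiss : 2 * (e ⬝ᵥ (P *ᵥ (Ar *ᵥ e))) = -(e ⬝ᵥ (R *ᵥ e)) := by
    rw [hP.two_mul_dotProduct_mulVec_mulVec, eq_neg_of_add_eq_zero_left hLyap, neg_mulVec,
      dotProduct_neg]
  have hadapt : ∑ j, 2 * (W j ⬝ᵥ (Λ *ᵥ ((γ * σ j) • (e ᵥ* (P * B)))))
      = 2 * γ * (e ⬝ᵥ (P *ᵥ ((B * Λ * Wᵀ) *ᵥ σ))) := by
    simp only [hcross, mulVec_smul, dotProduct_smul, smul_eq_mul, Finset.mul_sum]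
    exact Finset.sum_congr rfl fun j _ => by ring
  rw [hadapt, mulVec_sub, dotProduct_sub]
  field_simp
  linear_combination hdiss

lemma hasDerivAt_Vlyap (hP : P.IsSymm) (hL : L.IsSymm) (hLΛ : L * L = Λ)
    (hLyap : Arᵀ * P + P * Ar + R = 0) (hγ : γ ≠ 0) {σ : Fin N → ℝ} {e : ℝ → Fin n → ℝ}
    {W : ℝ → Matrix (Fin N) (Fin m) ℝ} {t : ℝ}
    (he : HasDerivAt e (Ar *ᵥ e t - (B * Λ * (W t)ᵀ) *ᵥ σ) t)
    (hW : ∀ i j, HasDerivAt (fun s => W s i j) (γ * (σ i * (e t ᵥ* (P * B)) j)) t) :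
    HasDerivAt (fun s => Vlyap γ P L (e s) (W s)) (-(e t ⬝ᵥ (R *ᵥ e t))) t := by
  have hΛ : Λ.IsSymm := hLΛ ▸ sq L ▸ hL.pow 2
  have hrow : ∀ j, HasDerivAt (fun s => W s j) ((γ * σ j) • (e t ᵥ* (P * B))) t := fun j =>
    hasDerivAt_pi.mpr fun k => by
      simpa only [Pi.smul_apply, smul_eq_mul, mul_assoc] using hW j k
  simp only [Vlyap_eq_add_sum_rows hL hLΛ]
  have hsum : HasDerivAt (fun s => ∑ j, W s j ⬝ᵥ (Λ *ᵥ W s j))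
      (∑ j, 2 * (W t j ⬝ᵥ (Λ *ᵥ ((γ * σ j) • (e t ᵥ* (P * B)))))) t :=
    HasDerivAt.fun_sum fun j _ => (hrow j).dotProduct_mulVec_self hΛ
  exact ((he.dotProduct_mulVec_self hP).add (hsum.const_mul γ⁻¹)).congr_deriv
    (lyapunov_derivative_eq hP hΛ hLyap hγ (e t) (W t) σ)

end Trajectory

theorem statement1_general
    {n N m : ℕ} (hn : 0 < n)
    (Ar : Matrix (Fin n) (Fin n) ℝ) (B : Matrix (Fin n) (Fin m) ℝ)
    (Lam Lhalf : Matrix (Fin m) (Fin m) ℝ) (R P : Matrix (Fin n) (Fin n) ℝ)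
    (hLhalfDiag : Lhalf.IsDiag) (hLhalfSq : Lhalf * Lhalf = Lam)
    (hR : R.PosDef) (hP : P.PosDef)
    (hLyap : Arᵀ * P + P * Ar + R = 0)
    (γ : ℝ) (hγ : 0 < γ)
    (σx : ℝ → Fin N → ℝ)
    (e : ℝ → Fin n → ℝ) (Wt : ℝ → Matrix (Fin N) (Fin m) ℝ)
    (he : ∀ t ≥ (0:ℝ), HasDerivAt e (Ar *ᵥ e t - (B * Lam * (Wt t)ᵀ) *ᵥ σx t) t)
    (hW : ∀ t ≥ (0:ℝ), ∀ i j, HasDerivAt (fun s => Wt s i j)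
          (γ * (σx t i * ((e t) ᵥ* (P * B)) j)) t)
    : ∀ t ≥ (0:ℝ),
      Vlyap γ P Lhalf (e t) (Wt t) ≤ Vlyap γ P Lhalf (e 0) (Wt 0)
      ∧ norm2 (e t) ≤ Real.sqrt (Vlyap γ P Lhalf (e 0) (Wt 0) / lamMin hP.1) := by
  have hPsymm : P.IsSymm := isHermitian_iff_isSymm.mp hP.1
  have hV : ∀ t ≥ (0:ℝ), HasDerivAt (fun s => Vlyap γ P Lhalf (e s) (Wt s))
      (-(e t ⬝ᵥ (R *ᵥ e t))) t := fun t ht =>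
    hasDerivAt_Vlyap hPsymm hLhalfDiag.isSymm hLhalfSq hLyap hγ.ne' (he t ht) (hW t ht)
  have hdecay : AntitoneOn (fun s => Vlyap γ P Lhalf (e s) (Wt s)) (Set.Ici 0) :=
    antitoneOn_Ici_of_hasDerivAt_nonpos hV fun t _ => neg_nonpos.mpr (by
      simpa using hR.posSemidef.dotProduct_mulVec_nonneg (e t))
  intro t ht
  have hVt : Vlyap γ P Lhalf (e t) (Wt t) ≤ Vlyap γ P Lhalf (e 0) (Wt 0) :=
    hdecay Set.self_mem_Ici ht ht
  exact ⟨hVt, norm2_le_sqrt_div_lamMin hn hP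
    ((dotProduct_mulVec_le_Vlyap hγ P Lhalf _ _).trans hVt)⟩

theorem statement1
    {n N m : ℕ} (hn : 0 < n) (hN : 0 < N) (hm : 0 < m)
    (Ar : Matrix (Fin n) (Fin n) ℝ) (B : Matrix (Fin n) (Fin m) ℝ)
    (Lam Lhalf : Matrix (Fin m) (Fin m) ℝ) (R P : Matrix (Fin n) (Fin n) ℝ)
    (hAr : Hurwitz Ar)
    (hLam : Lam.PosDef) (hLamDiag : Lam.IsDiag)
    (hLhalfDiag : Lhalf.IsDiag) (hLhalfSq : Lhalf * Lhalf = Lam)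
    (hR : R.PosDef) (hP : P.PosDef)
    (hLyap : Arᵀ * P + P * Ar + R = 0)
    (γ : ℝ) (hγ : 0 < γ)
    (σx : ℝ → Fin N → ℝ)
    (e : ℝ → Fin n → ℝ) (Wt : ℝ → Matrix (Fin N) (Fin m) ℝ)
    (he : ∀ t ≥ (0:ℝ), HasDerivAt e (Ar *ᵥ e t - (B * Lam * (Wt t)ᵀ) *ᵥ σx t) t)
    (hW : ∀ t ≥ (0:ℝ), ∀ i j, HasDerivAt (fun s => Wt s i j)
          (γ * (σx t i * ((e t) ᵥ* (P * B)) j)) t)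
    : ∀ t ≥ (0:ℝ),
      Vlyap γ P Lhalf (e t) (Wt t) ≤ Vlyap γ P Lhalf (e 0) (Wt 0)
      ∧ norm2 (e t) ≤ Real.sqrt (Vlyap γ P Lhalf (e 0) (Wt 0) / lamMin hP.1) :=
  statement1_general hn Ar B Lam Lhalf R P hLhalfDiag hLhalfSq hR hP hLyap γ hγ σx e Wt he hW
end
end

section
/- If σx is bounded on [0,∞), then the system error converges asymptotically to zero: e(t) → 0 as t → ∞. -/
/-! Along solutions, `V = eᵀPe + γ⁻¹ ∑ Λⱼⱼ W̃ᵢⱼ²` satisfies `V' = -eᵀRe`: the Lyapunov equation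
turns the linear part into `-eᵀRe` and the update law cancels the cross term. Hence `V` is
nonincreasing and converges, and `(e, W̃)` stays in a sublevel set of `V`, which is compact.
With `σx` bounded, the derivative of `eᵀRe` is then bounded along the solution, so `eᵀRe` is
uniformly continuous and Barbalat's lemma gives `eᵀRe → 0`, hence `e → 0`. -/

open Matrix Filter

noncomputable section

open Set Topology

namespace Matrix

variable {ι : Type*} [Fintype ι]

theorem continuous_dotProduct_mulVec_self (P : Matrix ι ι ℝ) :
    Continuous fun x : ι → ℝ => x ⬝ᵥ (P *ᵥ x) :=
  continuous_id.dotProduct (continuous_const.matrix_mulVec continuous_id)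

theorem PosDef.exists_pos_mul_norm_sq_le {P : Matrix ι ι ℝ} (hP : P.PosDef) :
    ∃ c > 0, ∀ x : ι → ℝ, c * ‖x‖ ^ 2 ≤ x ⬝ᵥ (P *ᵥ x) := by
  rcases subsingleton_or_nontrivial (ι → ℝ) with _ | _
  · exact ⟨1, one_pos, fun x => by simp [Subsingleton.elim x 0]⟩
  obtain ⟨u, hu, hmin⟩ := (isCompact_sphere (0 : ι → ℝ) 1).exists_isMinOn
    (NormedSpace.sphere_nonempty.2 zero_le_one) (continuous_dotProduct_mulVec_self P).continuousOn
  have hu0 : u ≠ 0 := ne_zero_of_mem_unit_sphere ⟨u, hu⟩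
  refine ⟨u ⬝ᵥ (P *ᵥ u), by simpa using hP.dotProduct_mulVec_pos hu0, fun x => ?_⟩
  rcases eq_or_ne x 0 with rfl | hx
  · simp
  have hx' : ‖x‖ ≠ 0 := norm_ne_zero_iff.2 hx
  calc u ⬝ᵥ (P *ᵥ u) * ‖x‖ ^ 2
      ≤ (‖x‖⁻¹ • x) ⬝ᵥ (P *ᵥ (‖x‖⁻¹ • x)) * ‖x‖ ^ 2 := by
        gcongr
        exact hmin (by simp [norm_smul, hx'])
    _ = x ⬝ᵥ (P *ᵥ x) := by
        simp only [mulVec_smul, smul_dotProduct, dotProduct_smul, smul_eq_mul]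
        field_simp

theorem PosDef.tendsto_zero_of_tendsto_dotProduct_mulVec {α : Type*} {l : Filter α}
    {P : Matrix ι ι ℝ} (hP : P.PosDef) {x : α → ι → ℝ}
    (hx : Tendsto (fun a => x a ⬝ᵥ (P *ᵥ x a)) l (𝓝 0)) : Tendsto x l (𝓝 0) := by
  obtain ⟨c, hc, hle⟩ := hP.exists_pos_mul_norm_sq_le
  rw [tendsto_zero_iff_norm_tendsto_zero]
  refine squeeze_zero (fun _ => norm_nonneg _) (fun a => ?_) (by simpa using (hx.div_const c).sqrt)
  exact Real.le_sqrt_of_sq_le ((le_div_iff₀' hc).2 (hle (x a)))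

end Matrix

theorem AntitoneOn.exists_tendsto_atTop {f : ℝ → ℝ} {a b : ℝ} (hf : AntitoneOn f (Ici a))
    (hb : ∀ t ≥ a, b ≤ f t) : ∃ L, Tendsto f atTop (𝓝 L) := by
  have hg : Antitone fun t => f (max t a) := fun s t hst =>
    hf (le_max_right s a) (le_max_right t a) (max_le_max hst le_rfl)
  refine ⟨_, (tendsto_atTop_ciInf hg ⟨b, ?_⟩).congr' ?_⟩
  · rintro _ ⟨t, rfl⟩
    exact hb _ (le_max_right t a)
  · filter_upwards [eventually_ge_atTop a] with t ht
    rw [max_eq_left ht]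

theorem abs_sub_sub_mul_le_of_hasDerivAt {f f' : ℝ → ℝ} {t δ C : ℝ} (hδ : 0 ≤ δ)
    (hf : ∀ s ∈ Icc t (t + δ), HasDerivAt f (f' s) s)
    (hC : ∀ s ∈ Icc t (t + δ), |f' s - f' t| ≤ C) :
    |f (t + δ) - f t - δ * f' t| ≤ C * δ := by
  have hg : ∀ s ∈ Icc t (t + δ), HasDerivWithinAt (fun s => f s - s * f' t) (f' s - f' t)
      (Icc t (t + δ)) s := fun s hs => by
    simpa using ((hf s hs).fun_sub ((hasDerivAt_id s).mul_const (f' t))).hasDerivWithinAt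
  have := (convex_Icc t (t + δ)).norm_image_sub_le_of_norm_hasDerivWithin_le hg hC
    (left_mem_Icc.2 (by linarith)) (right_mem_Icc.2 (by linarith))
  simp only [Real.norm_eq_abs, add_sub_cancel_left, abs_of_nonneg hδ] at this
  convert this using 2
  ring

/-- Barbalat's lemma. -/
theorem tendsto_zero_of_hasDerivAt_of_tendsto {f f' : ℝ → ℝ} {a L : ℝ}
    (hf : ∀ t ≥ a, HasDerivAt f (f' t) t) (hL : Tendsto f atTop (𝓝 L))
    (hf' : UniformContinuousOn f' (Ici a)) : Tendsto f' atTop (𝓝 0) := by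
  rw [Metric.tendsto_atTop]
  intro ε hε
  obtain ⟨δ, hδ, hδf'⟩ := Metric.uniformContinuousOn_iff_le.1 hf' (ε / 2) (half_pos hε)
  have hstep : Tendsto (fun t => f (t + δ) - f t) atTop (𝓝 0) := by
    simpa using (hL.comp (tendsto_atTop_add_const_right _ δ tendsto_id)).sub hL
  obtain ⟨T, hT⟩ := Metric.tendsto_atTop.1 hstep (δ * (ε / 2)) (by positivity)
  refine ⟨max T a, fun t ht => ?_⟩
  have hta : a ≤ t := le_of_max_le_right ht
  have htaylor : |f (t + δ) - f t - δ * f' t| ≤ ε / 2 * δ := by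
    refine abs_sub_sub_mul_le_of_hasDerivAt hδ.le (fun s hs => hf s (hta.trans hs.1))
      (fun s hs => ?_)
    rw [← Real.dist_eq]
    refine hδf' s (hta.trans hs.1) t hta ?_
    rw [Real.dist_eq, abs_of_nonneg (by linarith [hs.1])]
    linarith [hs.2]
  have hT' := hT t (le_of_max_le_left ht)
  rw [Real.dist_eq, sub_zero] at hT' ⊢
  have : δ * |f' t| < δ * ε := by
    calc δ * |f' t| = |δ * f' t| := by rw [abs_mul, abs_of_pos hδ]
      _ ≤ |f (t + δ) - f t| + |f (t + δ) - f t - δ * f' t| := by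
          simpa using abs_sub (f (t + δ) - f t) (f (t + δ) - f t - δ * f' t)
      _ < δ * ε := by linarith
  exact lt_of_mul_lt_mul_left this hδ.le

section Lyapunov

variable {ι κ ν : Type*} [Fintype ι] [Fintype κ] [Fintype ν]

theorem hasDerivAt_dotProduct_mulVec_self (P : Matrix ι ι ℝ) {x : ℝ → ι → ℝ} {x' : ι → ℝ}
    {t : ℝ} (hx : HasDerivAt x x' t) :
    HasDerivAt (fun s => x s ⬝ᵥ (P *ᵥ x s)) (x' ⬝ᵥ (P *ᵥ x t) + x t ⬝ᵥ (P *ᵥ x')) t := by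
  have hxi : ∀ i, HasDerivAt (fun s => x s i) (x' i) t := hasDerivAt_pi.1 hx
  refine (HasDerivAt.fun_sum fun i _ => (hxi i).fun_mul
    (HasDerivAt.fun_sum fun j _ => (hxi j).const_mul (P i j))).congr_deriv ?_
  simp only [dotProduct, mulVec, Finset.sum_add_distrib]

theorem hasDerivAt_sum_sum_mul_sq (c : κ → ℝ) {W : ℝ → Matrix ν κ ℝ} {W' : Matrix ν κ ℝ}
    {t : ℝ} (hW : ∀ i j, HasDerivAt (fun s => W s i j) (W' i j) t) :
    HasDerivAt (fun s => ∑ i, ∑ j, c j * W s i j ^ 2)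
      (∑ i, ∑ j, c j * (2 * W t i j * W' i j)) t := by
  refine HasDerivAt.fun_sum fun i _ => HasDerivAt.fun_sum fun j _ => ?_
  refine (((hW i j).fun_pow 2).const_mul (c j)).congr_deriv ?_
  norm_num

theorem dotProduct_mulVec_add_eq_of_lyapunov {A P R : Matrix ι ι ℝ} (hLyap : Aᵀ * P + P * A + R = 0)
    (v : ι → ℝ) : (A *ᵥ v) ⬝ᵥ (P *ᵥ v) + v ⬝ᵥ (P *ᵥ (A *ᵥ v)) = -(v ⬝ᵥ (R *ᵥ v)) := by
  have h1 : (A *ᵥ v) ⬝ᵥ (P *ᵥ v) = v ⬝ᵥ ((Aᵀ * P) *ᵥ v) := by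
    rw [← mulVec_mulVec, dotProduct_mulVec v Aᵀ, vecMul_transpose]
  rw [h1, mulVec_mulVec, ← dotProduct_add, ← add_mulVec, eq_neg_of_add_eq_zero_left hLyap,
    neg_mulVec, dotProduct_neg]

theorem dotProduct_mulVec_add_eq_of_isDiag {P : Matrix ι ι ℝ} (hP : P.IsSymm) (B : Matrix ι κ ℝ)
    {Lam : Matrix κ κ ℝ} (hLam : Lam.IsDiag) (W : Matrix ν κ ℝ) (v : ι → ℝ) (s : ν → ℝ) :
    ((B * Lam * Wᵀ) *ᵥ s) ⬝ᵥ (P *ᵥ v) + v ⬝ᵥ (P *ᵥ ((B * Lam * Wᵀ) *ᵥ s))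
      = 2 * ∑ i, ∑ j, Lam j j * (W i j * (s i * (v ᵥ* (P * B)) j)) := by
  classical
  have hPv : P *ᵥ v = v ᵥ* P := by rw [← mulVec_transpose, hP.eq]
  have hweights : v ᵥ* (P * (B * Lam * Wᵀ)) = W *ᵥ (v ᵥ* (P * B) ᵥ* diagonal (diag Lam)) := by
    rw [hLam.diagonal_diag, ← vecMul_transpose, vecMul_vecMul, vecMul_vecMul, Matrix.mul_assoc,
      Matrix.mul_assoc]
  rw [dotProduct_comm, hPv, ← dotProduct_mulVec, mulVec_mulVec, dotProduct_mulVec, hweights,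
    ← two_mul]
  simp only [dotProduct, mulVec, vecMul_diagonal, diag_apply, Finset.sum_mul, Finset.mul_sum]
  exact Finset.sum_congr rfl fun i _ => Finset.sum_congr rfl fun j _ => by ring

/-- `Vlyap` with `tr((W Λ^{1/2})ᵀ (W Λ^{1/2}))` written out as `∑ᵢⱼ Λⱼⱼ Wᵢⱼ²`, which needs no
square root of `Λ`. -/
def lyapunovValue (γ : ℝ) (P : Matrix ι ι ℝ) (Lam : Matrix κ κ ℝ) (x : ι → ℝ)
    (W : Matrix ν κ ℝ) : ℝ :=
  x ⬝ᵥ (P *ᵥ x) + γ⁻¹ * ∑ i, ∑ j, Lam j j * W i j ^ 2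

theorem hasDerivAt_lyapunovValue {A P R : Matrix ι ι ℝ} (hP : P.IsSymm)
    (hLyap : Aᵀ * P + P * A + R = 0) (B : Matrix ι κ ℝ) {Lam : Matrix κ κ ℝ} (hLam : Lam.IsDiag)
    {γ : ℝ} (hγ : γ ≠ 0) {e : ℝ → ι → ℝ} {W : ℝ → Matrix ν κ ℝ} {s : ν → ℝ} {t : ℝ}
    (he : HasDerivAt e (A *ᵥ e t - (B * Lam * (W t)ᵀ) *ᵥ s) t)
    (hW : ∀ i j, HasDerivAt (fun r => W r i j) (γ * (s i * (e t ᵥ* (P * B)) j)) t) :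
    HasDerivAt (fun r => lyapunovValue γ P Lam (e r) (W r)) (-(e t ⬝ᵥ (R *ᵥ e t))) t := by
  refine ((hasDerivAt_dotProduct_mulVec_self P he).add
    ((hasDerivAt_sum_sum_mul_sq _ hW).const_mul γ⁻¹)).congr_deriv ?_
  have hupdate : γ⁻¹ * ∑ i, ∑ j, Lam j j * (2 * W t i j * (γ * (s i * (e t ᵥ* (P * B)) j)))
      = 2 * ∑ i, ∑ j, Lam j j * (W t i j * (s i * (e t ᵥ* (P * B)) j)) := by
    simp only [Finset.mul_sum]
    exact Finset.sum_congr rfl fun i _ => Finset.sum_congr rfl fun j _ => by field_simp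
  rw [hupdate, ← dotProduct_mulVec_add_eq_of_isDiag hP B hLam,
    ← dotProduct_mulVec_add_eq_of_lyapunov hLyap, sub_dotProduct, mulVec_sub, dotProduct_sub]
  ring

theorem lyapunovValue_nonneg {P : Matrix ι ι ℝ} (hP : P.PosDef) {Lam : Matrix κ κ ℝ}
    (hLam : Lam.PosDef) {γ : ℝ} (hγ : 0 ≤ γ) (x : ι → ℝ) (W : Matrix ν κ ℝ) :
    0 ≤ lyapunovValue γ P Lam x W :=
  add_nonneg (by simpa using hP.posSemidef.dotProduct_mulVec_nonneg x) <|
    mul_nonneg (inv_nonneg.2 hγ) <| Finset.sum_nonneg fun _ _ => Finset.sum_nonneg fun _ _ =>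
      mul_nonneg hLam.diag_pos.le (sq_nonneg _)

theorem isCompact_setOf_lyapunovValue_le {P : Matrix ι ι ℝ} (hP : P.PosDef)
    {Lam : Matrix κ κ ℝ} (hLam : Lam.PosDef) {γ : ℝ} (hγ : 0 < γ) (c : ℝ) :
    IsCompact {p : (ι → ℝ) × Matrix ν κ ℝ | lyapunovValue γ P Lam p.1 p.2 ≤ c} := by
  obtain ⟨a, ha, hle⟩ := hP.exists_pos_mul_norm_sq_le
  have hclosed : IsClosed {p : (ι → ℝ) × Matrix ν κ ℝ | lyapunovValue γ P Lam p.1 p.2 ≤ c} :=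
    isClosed_le (by unfold lyapunovValue; fun_prop) continuous_const
  refine ((isCompact_closedBall (0 : ι → ℝ) √(c / a)).prod (isCompact_univ_pi fun i =>
    isCompact_univ_pi fun j => isCompact_Icc (a := -√(γ * c / Lam j j)) (b := √(γ * c / Lam j j)))
    ).of_isClosed_subset hclosed ?_
  rintro ⟨x, W⟩ (hp : lyapunovValue γ P Lam x W ≤ c)
  have hterm : ∀ i j, 0 ≤ Lam j j * W i j ^ 2 := fun _ _ =>
    mul_nonneg hLam.diag_pos.le (sq_nonneg _)
  have hquad : 0 ≤ x ⬝ᵥ (P *ᵥ x) := by simpa using hP.posSemidef.dotProduct_mulVec_nonneg x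
  have hweights : 0 ≤ γ⁻¹ * ∑ i, ∑ j, Lam j j * W i j ^ 2 :=
    mul_nonneg (inv_nonneg.2 hγ.le) <| Finset.sum_nonneg fun i _ => Finset.sum_nonneg fun j _ =>
      hterm i j
  unfold lyapunovValue at hp
  refine ⟨mem_closedBall_zero_iff.2 (Real.le_sqrt_of_sq_le ?_),
    fun i _ j _ => abs_le.1 (Real.abs_le_sqrt ?_)⟩
  · rw [le_div_iff₀' ha]
    linarith [hle x]
  · rw [le_div_iff₀ hLam.diag_pos, mul_comm]
    calc Lam j j * W i j ^ 2 ≤ ∑ j', Lam j' j' * W i j' ^ 2 :=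
          Finset.single_le_sum (fun j' _ => hterm i j') (Finset.mem_univ j)
      _ ≤ ∑ i', ∑ j', Lam j' j' * W i' j' ^ 2 :=
          Finset.single_le_sum (f := fun i' => ∑ j', Lam j' j' * W i' j' ^ 2)
            (fun i' _ => Finset.sum_nonneg fun j' _ => hterm i' j') (Finset.mem_univ i)
      _ ≤ γ * c := (inv_mul_le_iff₀ hγ).1 (by linarith)

end Lyapunov

theorem abs_le_norm2 {n : ℕ} (v : Fin n → ℝ) (i : Fin n) : |v i| ≤ norm2 v :=
  Real.abs_le_sqrt (Finset.single_le_sum (fun j _ => sq_nonneg (v j)) (Finset.mem_univ i))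

theorem statement3_general
    {n N m : ℕ}
    (Ar : Matrix (Fin n) (Fin n) ℝ) (B : Matrix (Fin n) (Fin m) ℝ)
    (Lam : Matrix (Fin m) (Fin m) ℝ) (R P : Matrix (Fin n) (Fin n) ℝ)
    (hLam : Lam.PosDef) (hLamDiag : Lam.IsDiag)
    (hR : R.PosDef) (hP : P.PosDef)
    (hLyap : Arᵀ * P + P * Ar + R = 0)
    (γ : ℝ) (hγ : 0 < γ)
    (σx : ℝ → Fin N → ℝ)
    (e : ℝ → Fin n → ℝ) (Wt : ℝ → Matrix (Fin N) (Fin m) ℝ)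
    (he : ∀ t ≥ (0:ℝ), HasDerivAt e (Ar *ᵥ e t - (B * Lam * (Wt t)ᵀ) *ᵥ σx t) t)
    (hW : ∀ t ≥ (0:ℝ), ∀ i j, HasDerivAt (fun s => Wt s i j)
          (γ * (σx t i * ((e t) ᵥ* (P * B)) j)) t)
    (hσ : ∃ C : ℝ, ∀ t ≥ (0:ℝ), norm2 (σx t) ≤ C)
    : Tendsto e atTop (nhds 0) := by
  obtain ⟨C, hC⟩ := hσ
  set V := fun t => lyapunovValue γ P Lam (e t) (Wt t)
  have hV : ∀ t ≥ 0, HasDerivAt V (-(e t ⬝ᵥ (R *ᵥ e t))) t := fun t ht =>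
    hasDerivAt_lyapunovValue (isHermitian_iff_isSymm.1 hP.isHermitian) hLyap B hLamDiag hγ.ne'
      (he t ht) (hW t ht)
  have hVanti : AntitoneOn V (Ici 0) :=
    antitoneOn_of_hasDerivWithinAt_nonpos (convex_Ici 0)
      (fun t ht => (hV t ht).continuousAt.continuousWithinAt)
      (fun t ht => (hV t (interior_subset ht)).hasDerivWithinAt)
      (fun t _ => neg_nonpos.2 (by simpa using hR.posSemidef.dotProduct_mulVec_nonneg (e t)))
  obtain ⟨L, hL⟩ := hVanti.exists_tendsto_atTop fun t _ => lyapunovValue_nonneg hP hLam hγ.le _ _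
  set K := {p : (Fin n → ℝ) × Matrix (Fin N) (Fin m) ℝ | lyapunovValue γ P Lam p.1 p.2 ≤ V 0} ×ˢ
    univ.pi fun _ : Fin N => Icc (-C) C
  have hK : IsCompact K :=
    (isCompact_setOf_lyapunovValue_le hP hLam hγ _).prod (isCompact_univ_pi fun _ => isCompact_Icc)
  have hmem : ∀ t ≥ 0, ((e t, Wt t), σx t) ∈ K := fun t ht =>
    ⟨hVanti self_mem_Ici ht ht, fun i _ => abs_le.1 ((abs_le_norm2 _ i).trans (hC t ht))⟩
  let dissipationDeriv : ((Fin n → ℝ) × Matrix (Fin N) (Fin m) ℝ) × (Fin N → ℝ) → ℝ := fun p =>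
    (Ar *ᵥ p.1.1 - (B * Lam * p.1.2ᵀ) *ᵥ p.2) ⬝ᵥ (R *ᵥ p.1.1) +
      p.1.1 ⬝ᵥ (R *ᵥ (Ar *ᵥ p.1.1 - (B * Lam * p.1.2ᵀ) *ᵥ p.2))
  obtain ⟨M, hM⟩ := (hK.image (continuous_nnnorm.comp
    (by fun_prop : Continuous dissipationDeriv))).bddAbove
  have hLip : LipschitzOnWith M (fun t => e t ⬝ᵥ (R *ᵥ e t)) (Ici 0) :=
    (convex_Ici 0).lipschitzOnWith_of_nnnorm_hasDerivWithin_le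
      (fun t ht => (hasDerivAt_dotProduct_mulVec_self R (he t ht)).hasDerivWithinAt)
      (fun t ht => hM ⟨_, hmem t ht, rfl⟩)
  exact hR.tendsto_zero_of_tendsto_dotProduct_mulVec <|
    tendsto_zero_of_hasDerivAt_of_tendsto (fun t ht => (hV t ht).neg.congr_deriv (neg_neg _)) hL.neg
      hLip.uniformContinuousOn

theorem statement3
    {n N m : ℕ} (hn : 0 < n) (hN : 0 < N) (hm : 0 < m)
    (Ar : Matrix (Fin n) (Fin n) ℝ) (B : Matrix (Fin n) (Fin m) ℝ)
    (Lam Lhalf : Matrix (Fin m) (Fin m) ℝ) (R P : Matrix (Fin n) (Fin n) ℝ)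
    (hAr : Hurwitz Ar)
    (hLam : Lam.PosDef) (hLamDiag : Lam.IsDiag)
    (hLhalfDiag : Lhalf.IsDiag) (hLhalfSq : Lhalf * Lhalf = Lam)
    (hR : R.PosDef) (hP : P.PosDef)
    (hLyap : Arᵀ * P + P * Ar + R = 0)
    (γ : ℝ) (hγ : 0 < γ)
    (σx : ℝ → Fin N → ℝ)
    (e : ℝ → Fin n → ℝ) (Wt : ℝ → Matrix (Fin N) (Fin m) ℝ)
    (he : ∀ t ≥ (0:ℝ), HasDerivAt e (Ar *ᵥ e t - (B * Lam * (Wt t)ᵀ) *ᵥ σx t) t)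
    (hW : ∀ t ≥ (0:ℝ), ∀ i j, HasDerivAt (fun s => Wt s i j)
          (γ * (σx t i * ((e t) ᵥ* (P * B)) j)) t)
    (hσ : ∃ C : ℝ, ∀ t ≥ (0:ℝ), norm2 (σx t) ≤ C)
    : Tendsto e atTop (nhds 0) :=
  statement3_general Ar B Lam R P hLam hLamDiag hR hP hLyap γ hγ σx e Wt he hW hσ
end
end

section
/- (Theorem 6.1) There exist constants C > 0 and κ₀ > 0 such that for every κ ≥ κ₀ and every t ≥ 0, ‖e_{H,κ}(t) − e^{−κt} e₀‖₂ ≤ C/κ; that is, the high-frequency system error satisfies e_H(t, κ) = e^{−κt} e_H(0) + O(κ^{−1}) uniformly in t ≥ 0 for sufficiently large κ. -/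
/-!
Put `g(t) := e_H(t) − e^{−κt} e₀`. Subtracting the filter equation from the error equation gives
`g' = A_r g − (κ + η) g + (e^{−κt} (A_r − η) e₀ − f)` with `g(0) = 0`, a linear system whose
damping `κ + η` exceeds `‖A_r‖` by at least `κ / 2` once `κ ≥ 2‖A_r‖`, driven by a forcing term
of norm at most `b := M + ‖(A_r − η) e₀‖`. Then `(‖g‖²)' ≤ −2a‖g‖² + 2b‖g‖` with
`a := κ + η − ‖A_r‖`, and Grönwall's inequality for `‖g‖²` keeps `‖g‖ ≤ b / a ≤ 2b / κ`.
-/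

open Matrix Filter

noncomputable section

open scoped RealInnerProductSpace

theorem gronwallBound_zero_neg_le {a ε : ℝ} (ha : 0 < a) (hε : 0 ≤ ε) (x : ℝ) :
    gronwallBound 0 (-a) ε x ≤ ε / a := by
  rw [gronwallBound_of_K_ne_0 (neg_ne_zero.mpr ha.ne')]
  dsimp only
  rw [zero_mul, zero_add, div_neg, neg_mul, ← mul_neg, neg_sub]
  exact mul_le_of_le_one_right (div_nonneg hε ha.le)
    (sub_le_self _ (Real.exp_pos _).le)

section InnerProductSpace

variable {E : Type*} [NormedAddCommGroup E] [InnerProductSpace ℝ E]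

theorem norm_le_div_of_inner_deriv_le {g g' : ℝ → E} {a b : ℝ} (ha : 0 < a) (hb : 0 ≤ b)
    (hg0 : g 0 = 0) (hg : ∀ s ≥ 0, HasDerivAt g (g' s) s)
    (hinner : ∀ s ≥ 0, ⟪g s, g' s⟫ ≤ -a * ‖g s‖ ^ 2 + b * ‖g s‖) {t : ℝ} (ht : 0 ≤ t) :
    ‖g t‖ ≤ b / a := by
  have hsq : ‖g t‖ ^ 2 ≤ (b / a) ^ 2 := by
    have hφ := le_gronwallBound_of_liminf_deriv_right_le (f := (‖g ·‖ ^ 2))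
      (f' := fun s => 2 * ⟪g s, g' s⟫) (δ := 0) (K := -a) (ε := b ^ 2 / a) (a := 0) (b := t)
      (fun s hs => (hg s hs.1).norm_sq.continuousAt.continuousWithinAt)
      (fun s hs _ hr => (hg s hs.1).norm_sq.hasDerivWithinAt.liminf_right_slope_le hr)
      (by simp [hg0])
      (fun s hs => by
        -- AM-GM: `2 b ‖g‖ ≤ a ‖g‖² + b² / a`
        have amgm : 0 ≤ (a * ‖g s‖ - b) ^ 2 / a := by positivity
        have expand : (a * ‖g s‖ - b) ^ 2 / a = a * ‖g s‖ ^ 2 - 2 * b * ‖g s‖ + b ^ 2 / a := by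
          field_simp; ring
        linarith [hinner s hs.1])
      t ⟨ht, le_rfl⟩
    calc ‖g t‖ ^ 2 ≤ gronwallBound 0 (-a) (b ^ 2 / a) (t - 0) := hφ
      _ ≤ b ^ 2 / a / a := gronwallBound_zero_neg_le ha (by positivity) _
      _ = (b / a) ^ 2 := by ring
  exact (pow_le_pow_iff_left₀ (norm_nonneg _) (div_nonneg hb ha.le) two_ne_zero).mp hsq

theorem norm_le_div_of_hasDerivAt_sub_smul_add {L : E →L[ℝ] E} {c b : ℝ} {g h : ℝ → E}
    (hc : ‖L‖ < c) (hg0 : g 0 = 0)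
    (hg : ∀ s ≥ 0, HasDerivAt g (L (g s) - c • g s + h s) s) (hh : ∀ s ≥ 0, ‖h s‖ ≤ b)
    {t : ℝ} (ht : 0 ≤ t) : ‖g t‖ ≤ b / (c - ‖L‖) := by
  refine norm_le_div_of_inner_deriv_le (sub_pos.mpr hc) ((norm_nonneg _).trans (hh 0 le_rfl))
    hg0 hg (fun s hs => ?_) ht
  have hL : ⟪g s, L (g s)⟫ ≤ ‖L‖ * ‖g s‖ ^ 2 :=
    calc ⟪g s, L (g s)⟫ ≤ ‖g s‖ * ‖L (g s)‖ := real_inner_le_norm _ _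
      _ ≤ ‖g s‖ * (‖L‖ * ‖g s‖) := by gcongr; exact L.le_opNorm _
      _ = ‖L‖ * ‖g s‖ ^ 2 := by ring
  have hH : ⟪g s, h s⟫ ≤ b * ‖g s‖ :=
    calc ⟪g s, h s⟫ ≤ ‖g s‖ * ‖h s‖ := real_inner_le_norm _ _
      _ ≤ ‖g s‖ * b := by gcongr; exact hh s hs
      _ = b * ‖g s‖ := mul_comm _ _
  rw [inner_add_right, inner_sub_right, real_inner_smul_right, real_inner_self_eq_norm_sq]
  linarith

end InnerProductSpace

theorem norm2_eq_norm_toLp {n : ℕ} (v : Fin n → ℝ) : norm2 v = ‖WithLp.toLp 2 v‖ := by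
  simp [norm2, EuclideanSpace.norm_eq]

theorem HasDerivAt.toLp {n : ℕ} {u : ℝ → Fin n → ℝ} {u' : Fin n → ℝ} {t : ℝ}
    (hu : HasDerivAt u u' t) : HasDerivAt (fun s => WithLp.toLp 2 (u s)) (WithLp.toLp 2 u') t :=
  (PiLp.hasFDerivAt_toLp (𝕜 := ℝ) 2 (u t)).comp_hasDerivAt t hu

section HighFrequencyError

variable {n : ℕ} {Ar : Matrix (Fin n) (Fin n) ℝ} {η κ : ℝ} {e0 : Fin n → ℝ}
  {e eL f : ℝ → Fin n → ℝ}

theorem hasDerivAt_toLp_highFreqError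
    (he : ∀ s ≥ 0, HasDerivAt e (Ar *ᵥ e s - f s - κ • (e s - eL s)) s)
    (heL : ∀ s ≥ 0, HasDerivAt eL (Ar *ᵥ eL s + η • (e s - eL s)) s) {s : ℝ} (hs : 0 ≤ s) :
    HasDerivAt (fun s => WithLp.toLp 2 (e s - eL s - Real.exp (-κ * s) • e0))
      (Matrix.toEuclideanCLM (𝕜 := ℝ) Ar (WithLp.toLp 2 (e s - eL s - Real.exp (-κ * s) • e0))
        - (κ + η) • WithLp.toLp 2 (e s - eL s - Real.exp (-κ * s) • e0)
        + WithLp.toLp 2 (Real.exp (-κ * s) • (Ar *ᵥ e0 - η • e0) - f s)) s := by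
  have hexp := ((hasDerivAt_id s).const_mul (-κ)).exp.smul_const e0
  refine (((he s hs).sub (heL s hs)).sub hexp).toLp.congr_deriv ?_
  ext i
  simp only [id_eq, neg_mul, mul_one, mul_neg, neg_smul, Pi.sub_apply, Pi.smul_apply, smul_eq_mul,
    Pi.add_apply, Pi.neg_apply, sub_neg_eq_add, WithLp.toLp_sub, WithLp.toLp_smul, map_sub,
    toEuclideanCLM_toLp, map_smul, PiLp.add_apply, PiLp.sub_apply, PiLp.smul_apply]
  ring

theorem norm2_highFreqError_le {M : ℝ} (hκ : 0 ≤ κ)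
    (hc : ‖Matrix.toEuclideanCLM (𝕜 := ℝ) Ar‖ < κ + η) (hf : ∀ s ≥ 0, norm2 (f s) ≤ M)
    (he0 : e 0 = e0) (heL0 : eL 0 = 0)
    (he : ∀ s ≥ 0, HasDerivAt e (Ar *ᵥ e s - f s - κ • (e s - eL s)) s)
    (heL : ∀ s ≥ 0, HasDerivAt eL (Ar *ᵥ eL s + η • (e s - eL s)) s) {t : ℝ} (ht : 0 ≤ t) :
    norm2 (e t - eL t - Real.exp (-κ * t) • e0) ≤
      (M + norm2 (Ar *ᵥ e0 - η • e0)) / (κ + η - ‖Matrix.toEuclideanCLM (𝕜 := ℝ) Ar‖) := by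
  have hforcing : ∀ s ≥ 0,
      ‖WithLp.toLp 2 (Real.exp (-κ * s) • (Ar *ᵥ e0 - η • e0) - f s)‖ ≤
        M + norm2 (Ar *ᵥ e0 - η • e0) := by
    intro s hs
    have hexp : Real.exp (-κ * s) ≤ 1 :=
      Real.exp_le_one_iff.mpr (mul_nonpos_of_nonpos_of_nonneg (neg_nonpos.mpr hκ) hs)
    rw [WithLp.toLp_sub, WithLp.toLp_smul]
    refine (norm_sub_le _ _).trans ?_
    rw [norm_smul, Real.norm_of_nonneg (Real.exp_pos _).le, ← norm2_eq_norm_toLp,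
      ← norm2_eq_norm_toLp, add_comm M]
    exact add_le_add (mul_le_of_le_one_left (Real.sqrt_nonneg _) hexp) (hf s hs)
  rw [norm2_eq_norm_toLp]
  exact norm_le_div_of_hasDerivAt_sub_smul_add hc (by simp [he0, heL0])
    (fun s hs => hasDerivAt_toLp_highFreqError he heL hs) hforcing ht

end HighFrequencyError

theorem statement11_general
    {n : ℕ}
    (Ar : Matrix (Fin n) (Fin n) ℝ)
    (η : ℝ) (hη : 0 ≤ η) (e0 : Fin n → ℝ) (M : ℝ) (hM : 0 < M)
    (f e eL : ℝ → ℝ → Fin n → ℝ)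
    (hfb : ∀ κ > (0:ℝ), ∀ t ≥ (0:ℝ), norm2 (f κ t) ≤ M)
    (hei : ∀ κ > (0:ℝ), e κ 0 = e0) (heLi : ∀ κ > (0:ℝ), eL κ 0 = 0)
    (he : ∀ κ > (0:ℝ), ∀ t ≥ (0:ℝ), HasDerivAt (e κ)
          (Ar *ᵥ e κ t - f κ t - κ • (e κ t - eL κ t)) t)
    (heL : ∀ κ > (0:ℝ), ∀ t ≥ (0:ℝ), HasDerivAt (eL κ)
          (Ar *ᵥ eL κ t + η • (e κ t - eL κ t)) t)
    : ∃ C > (0:ℝ), ∃ κ₀ > (0:ℝ), ∀ κ ≥ κ₀, ∀ t ≥ (0:ℝ),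
      norm2 (e κ t - eL κ t - Real.exp (-κ * t) • e0) ≤ C / κ := by
  set A := ‖Matrix.toEuclideanCLM (𝕜 := ℝ) Ar‖
  set b := M + norm2 (Ar *ᵥ e0 - η • e0)
  have hA : 0 ≤ A := norm_nonneg _
  have hb : 0 < b := add_pos_of_pos_of_nonneg hM (Real.sqrt_nonneg _)
  refine ⟨2 * b, by positivity, 2 * A + 1, by positivity, fun κ hκ t ht => ?_⟩
  have hκ0 : 0 < κ := by linarith
  calc norm2 (e κ t - eL κ t - Real.exp (-κ * t) • e0) ≤ b / (κ + η - A) :=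
        norm2_highFreqError_le hκ0.le (by linarith) (hfb κ hκ0) (hei κ hκ0) (heLi κ hκ0)
          (he κ hκ0) (heL κ hκ0) ht
    _ ≤ b / (κ / 2) := div_le_div_of_nonneg_left hb.le (by positivity) (by linarith)
    _ = 2 * b / κ := by ring

theorem statement11
    {n : ℕ} (hn : 0 < n)
    (Ar : Matrix (Fin n) (Fin n) ℝ) (hAr : Hurwitz Ar)
    (η : ℝ) (hη : 0 ≤ η) (e0 : Fin n → ℝ) (M : ℝ) (hM : 0 < M)
    (f e eL : ℝ → ℝ → Fin n → ℝ)
    (hfc : ∀ κ > (0:ℝ), ContinuousOn (f κ) (Set.Ici 0))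
    (hfb : ∀ κ > (0:ℝ), ∀ t ≥ (0:ℝ), norm2 (f κ t) ≤ M)
    (hei : ∀ κ > (0:ℝ), e κ 0 = e0) (heLi : ∀ κ > (0:ℝ), eL κ 0 = 0)
    (he : ∀ κ > (0:ℝ), ∀ t ≥ (0:ℝ), HasDerivAt (e κ)
          (Ar *ᵥ e κ t - f κ t - κ • (e κ t - eL κ t)) t)
    (heL : ∀ κ > (0:ℝ), ∀ t ≥ (0:ℝ), HasDerivAt (eL κ)
          (Ar *ᵥ eL κ t + η • (e κ t - eL κ t)) t)
    : ∃ C > (0:ℝ), ∃ κ₀ > (0:ℝ), ∀ κ ≥ κ₀, ∀ t ≥ (0:ℝ),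
      norm2 (e κ t - eL κ t - Real.exp (-κ * t) • e0) ≤ C / κ :=
  statement11_general Ar η hη e0 M hM f e eL hfb hei heLi he heL
end
end
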